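/- Let λ₁,…,λₙ ∈ K satisfy λᵢ·λ_{n+1−i} = 0 for all i = 1,…,n, and let A ∈ Mₙ(K) be the skew-diagonal matrix with entries A_{n+1−i, i} = λᵢ and all other entries zero. Then A satisfies the numeric reflection equation, A² = 0, and Tr_q(A) = 0. -/

import Mathlib

/-!
Write `A₂ = 1 ⊗ A` and `τ (i, j) = (rev j, rev i)`. Since `A` is skew-diagonal, conjugating `S`
by `A₂` kills its diagonal part (those entries pick up `λ_{rev j} λ_j = 0`) and turns the flip
part into `A₂ S A₂ = P_τ · diag(λ_k λ_l)`. Both factors commute with `S`: the entries of `S` are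
invariant under `τ` applied to both indices, and `S` only connects `(i, j)` to `(i, j)` and
`(j, i)`, on which `λ_k λ_l` takes the same value. Hence `A₂ S A₂ S = S A₂ S A₂`.
-/

open Matrix Kronecker

/-- The Hecke matrix `S = q·Σᵢ E_{ii}⊗E_{ii} + Σ_{i≠j} E_{ij}⊗E_{ji} + (q−q⁻¹)·Σ_{i<j} E_{ii}⊗E_{jj}`. -/
noncomputable def heckeS (K : Type*) [Field K] (n : ℕ) (q : K) :
    Matrix (Fin n × Fin n) (Fin n × Fin n) K :=
  q • (∑ i : Fin n, Matrix.single i i (1 : K) ⊗ₖ Matrix.single i i (1 : K))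
    + ∑ i : Fin n, ∑ j : Fin n,
        (if i ≠ j then Matrix.single i j (1 : K) ⊗ₖ Matrix.single j i (1 : K) else 0)
    + (q - q⁻¹) • ∑ i : Fin n, ∑ j : Fin n,
        (if i < j then Matrix.single i i (1 : K) ⊗ₖ Matrix.single j j (1 : K) else 0)

/-- The skew-diagonal matrix with `A_{n+1−i,i} = λᵢ` (0-indexed: `A_{r,c} = λ_c` when
`r + c + 1 = n`) and all other entries zero. -/
def skewDiag {K : Type*} [Zero K] (n : ℕ) (lam : Fin n → K) : Matrix (Fin n) (Fin n) K :=
  Matrix.of fun r c => if (r : ℕ) + (c : ℕ) + 1 = n then lam c else 0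

/-- The diagonal matrix `D = Σᵢ q^{−2i+2}·E_{ii}` defining the quantum trace
`Tr_q(M) = Tr(D·M)`. -/
noncomputable def qTraceD (K : Type*) [Field K] (n : ℕ) (q : K) : Matrix (Fin n) (Fin n) K :=
  Matrix.diagonal fun i : Fin n => q ^ (-(2 * (i : ℕ) : ℤ))

section SkewDiag

variable {R : Type*} {n : ℕ}

lemma skewDiag_apply [Zero R] (lam : Fin n → R) (r c : Fin n) :
    skewDiag n lam r c = if c = r.rev then lam c else 0 := by
  have : (r : ℕ) + c + 1 = n ↔ c = r.rev := by
    rw [Fin.ext_iff, Fin.val_rev]; omega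
  simp only [skewDiag, Matrix.of_apply, this]

lemma skewDiag_mul_apply [NonUnitalNonAssocSemiring R] {m : Type*} (lam : Fin n → R)
    (M : Matrix (Fin n) m R) (r : Fin n) (c : m) :
    (skewDiag n lam * M) r c = lam r.rev * M r.rev c := by
  simp only [Matrix.mul_apply, skewDiag_apply, ite_mul, zero_mul, Finset.sum_ite_eq',
    Finset.mem_univ, if_true]

lemma skewDiag_mul_self [NonUnitalNonAssocSemiring R] {lam : Fin n → R}
    (hlam : ∀ i, lam i * lam i.rev = 0) : skewDiag n lam * skewDiag n lam = 0 := by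
  ext i j
  rw [skewDiag_mul_apply, skewDiag_apply, Fin.rev_rev, Matrix.zero_apply, mul_ite, mul_zero]
  split_ifs with h
  · simpa [h] using hlam i.rev
  · rfl

lemma trace_diagonal_mul_skewDiag [NonUnitalNonAssocSemiring R] [NoZeroDivisors R]
    (d : Fin n → R) {lam : Fin n → R} (hlam : ∀ i, lam i * lam i.rev = 0) :
    trace (diagonal d * skewDiag n lam) = 0 := by
  refine Finset.sum_eq_zero fun i _ => ?_
  rw [diag_apply, diagonal_mul, skewDiag_apply]
  split_ifs with h
  · have := hlam i
    rw [← h, mul_self_eq_zero] at this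
    rw [this, mul_zero]
  · exact mul_zero _

lemma one_kronecker_skewDiag_mul_apply [NonAssocSemiring R] (lam : Fin n → R)
    (M : Matrix (Fin n × Fin n) (Fin n × Fin n) R) (i j : Fin n) (y : Fin n × Fin n) :
    (((1 : Matrix (Fin n) (Fin n) R) ⊗ₖ skewDiag n lam) * M) (i, j) y
      = lam j.rev * M (i, j.rev) y := by
  simp only [Matrix.mul_apply, Fintype.sum_prod_type, kroneckerMap_apply, one_apply,
    skewDiag_apply, ite_mul, one_mul, zero_mul, Finset.sum_ite_irrel, Finset.sum_const_zero,
    Finset.sum_ite_eq, Finset.sum_ite_eq', Finset.mem_univ, if_true]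

lemma mul_one_kronecker_skewDiag_apply [NonAssocSemiring R] (lam : Fin n → R)
    (M : Matrix (Fin n × Fin n) (Fin n × Fin n) R) (x : Fin n × Fin n) (k l : Fin n) :
    (M * ((1 : Matrix (Fin n) (Fin n) R) ⊗ₖ skewDiag n lam)) x (k, l)
      = M x (k, l.rev) * lam l := by
  simp only [Matrix.mul_apply, Fintype.sum_prod_type, kroneckerMap_apply, one_apply,
    skewDiag_apply, ← Fin.rev_eq_iff, ite_mul, one_mul, zero_mul, mul_ite, mul_zero,
    Finset.sum_ite_eq', Finset.sum_ite_eq, Finset.mem_univ, if_true]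

end SkewDiag

def revSwap (n : ℕ) : Equiv.Perm (Fin n × Fin n) :=
  (Equiv.prodComm _ _).trans (Fin.revPerm.prodCongr Fin.revPerm)

@[simp]
lemma revSwap_apply {n : ℕ} (x : Fin n × Fin n) : revSwap n x = (x.2.rev, x.1.rev) := rfl

section Hecke

variable {K : Type*} [Field K] {n : ℕ} (q : K)

lemma heckeS_apply (i j k l : Fin n) :
    heckeS K n q (i, j) (k, l)
      = (if k = j ∧ l = i then (if i = j then q else 1) else 0)
        + (if i < j ∧ k = i ∧ l = j then q - q⁻¹ else 0) := by
  -- Moving the guards `i ≠ j` and `i < j` inwards lets `Finset.sum_ite_eq` collapse the sums.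
  have guard_ne : ∀ (P Q : Prop) [Decidable P] [Decidable Q] (f : K),
      (if P then 0 else if Q then f else 0) = if Q then (if P then 0 else f) else 0 := by
    intros; split_ifs <;> rfl
  have guard_lt : ∀ (a b : Fin n) (Q : Prop) [Decidable Q] (f : K),
      (if a < b then if Q then f else 0 else 0) = if Q then (if a < b then f else 0) else 0 := by
    intros; split_ifs <;> rfl
  simp only [heckeS, Matrix.add_apply, Matrix.smul_apply, Matrix.sum_apply,
    apply_ite (fun M : Matrix (Fin n × Fin n) (Fin n × Fin n) K => M (i, j) (k, l)),
    Matrix.kroneckerMap_apply, Matrix.single_apply, Matrix.zero_apply, smul_eq_mul]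
  simp only [eq_comm, ite_and, mul_ite, mul_one, mul_zero, Finset.sum_ite_eq, Finset.mem_univ,
    ↓reduceIte, ne_eq, ite_not, guard_ne, guard_lt, Finset.sum_ite_irrel, Finset.sum_const_zero]
  split_ifs <;> subst_vars <;> simp_all

lemma heckeS_revSwap_revSwap (x y : Fin n × Fin n) :
    heckeS K n q (revSwap n x) (revSwap n y) = heckeS K n q x y := by
  obtain ⟨i, j⟩ := x
  obtain ⟨k, l⟩ := y
  simp only [revSwap_apply, heckeS_apply, Fin.rev_inj, Fin.rev_lt_rev]
  grind

lemma commute_heckeS_permMatrix_revSwap :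
    Commute (heckeS K n q) ((revSwap n).permMatrix K) := by
  rw [Commute, SemiconjBy, PEquiv.mul_toMatrix_toPEquiv, PEquiv.toMatrix_toPEquiv_mul]
  ext x y
  simpa using (heckeS_revSwap_revSwap q x ((revSwap n).symm y)).symm

lemma commute_heckeS_diagonal {g : Fin n × Fin n → K} (hg : ∀ i j, g (i, j) = g (j, i)) :
    Commute (heckeS K n q) (diagonal g) := by
  ext ⟨i, j⟩ ⟨k, l⟩
  rw [mul_diagonal, diagonal_mul, heckeS_apply]
  split_ifs <;> subst_vars <;> simp_all [mul_comm]

lemma one_kronecker_skewDiag_mul_heckeS_mul {lam : Fin n → K} (hlam : ∀ i, lam i * lam i.rev = 0) :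
    ((1 : Matrix (Fin n) (Fin n) K) ⊗ₖ skewDiag n lam) * heckeS K n q
        * ((1 : Matrix (Fin n) (Fin n) K) ⊗ₖ skewDiag n lam)
      = (revSwap n).permMatrix K * diagonal fun x => lam x.1 * lam x.2 := by
  ext ⟨i, j⟩ ⟨k, l⟩
  obtain ⟨l, rfl⟩ := Fin.rev_surjective l
  rw [mul_one_kronecker_skewDiag_apply, one_kronecker_skewDiag_mul_apply, heckeS_apply,
    PEquiv.toMatrix_toPEquiv_mul, submatrix_apply, revSwap_apply, diagonal_apply]
  simp only [id, Prod.mk.injEq, Fin.rev_rev, Fin.rev_inj]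
  have hj : lam j.rev * lam j = 0 := by simpa using hlam j.rev
  by_cases hkl : k = j.rev ∧ l = i
  · obtain ⟨rfl, rfl⟩ := hkl
    have : ¬(l < j.rev ∧ j.rev = l ∧ l = j.rev) := fun h => h.1.ne h.2.2
    simp only [and_self, ↓reduceIte, if_neg this, add_zero]
    split_ifs with hlj
    · rw [hlj, Fin.rev_rev]
      linear_combination (q - 1) * hj
    · ring
  · rw [if_neg hkl, if_neg (show ¬(j.rev = k ∧ i = l) from fun h => hkl ⟨h.1.symm, h.2.symm⟩)]
    split_ifs with h
    · rw [h.2.2, Fin.rev_rev]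
      linear_combination (q - q⁻¹) * hj
    · ring

end Hecke

theorem skewDiag_nilpotent_reflection_general (K : Type*) [Field K] (n : ℕ)
    (q : K)
    (lam : Fin n → K) (hlam : ∀ i : Fin n, lam i * lam i.rev = 0) :
    ((1 : Matrix (Fin n) (Fin n) K) ⊗ₖ skewDiag n lam) * heckeS K n q
        * ((1 : Matrix (Fin n) (Fin n) K) ⊗ₖ skewDiag n lam) * heckeS K n q
      = heckeS K n q * ((1 : Matrix (Fin n) (Fin n) K) ⊗ₖ skewDiag n lam)
        * heckeS K n q * ((1 : Matrix (Fin n) (Fin n) K) ⊗ₖ skewDiag n lam) ∧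
    skewDiag n lam * skewDiag n lam = 0 ∧
    Matrix.trace (qTraceD K n q * skewDiag n lam) = 0 := by
  refine ⟨?_, skewDiag_mul_self hlam, trace_diagonal_mul_skewDiag _ hlam⟩
  have hcomm : Commute (heckeS K n q)
      ((revSwap n).permMatrix K * diagonal fun x => lam x.1 * lam x.2) :=
    (commute_heckeS_permMatrix_revSwap q).mul_right
      (commute_heckeS_diagonal q fun i j => mul_comm (lam i) (lam j))
  rw [one_kronecker_skewDiag_mul_heckeS_mul q hlam, ← hcomm.eq,
    ← one_kronecker_skewDiag_mul_heckeS_mul q hlam]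
  simp only [Matrix.mul_assoc]

/-- If `λᵢ·λ_{n+1−i} = 0` for all `i`, the skew-diagonal matrix `A` with entries `λᵢ` satisfies
the numeric reflection equation, `A² = 0`, and `Tr_q(A) = 0`. -/
theorem skewDiag_nilpotent_reflection (K : Type*) [Field K] (n : ℕ) (hn : 1 ≤ n)
    (q : K) (hq : q ≠ 0)
    (lam : Fin n → K) (hlam : ∀ i : Fin n, lam i * lam i.rev = 0) :
    ((1 : Matrix (Fin n) (Fin n) K) ⊗ₖ skewDiag n lam) * heckeS K n q
        * ((1 : Matrix (Fin n) (Fin n) K) ⊗ₖ skewDiag n lam) * heckeS K n q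
      = heckeS K n q * ((1 : Matrix (Fin n) (Fin n) K) ⊗ₖ skewDiag n lam)
        * heckeS K n q * ((1 : Matrix (Fin n) (Fin n) K) ⊗ₖ skewDiag n lam) ∧
    skewDiag n lam * skewDiag n lam = 0 ∧
    Matrix.trace (qTraceD K n q * skewDiag n lam) = 0 :=
  skewDiag_nilpotent_reflection_general K n q lam hlam
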